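/- arXiv:1708.04963 — 3 statements merged into one kernel-verified Lean document; each statement's English description precedes it below -/
import Mathlib

section
/- G_{f_0} is topologically transitive on (X,d): for every pair of nonempty open sets A, B ⊆ X there exists k ∈ ℕ with G_{f_0}^k(A) ∩ B ≠ ∅. -/
open scoped BigOperators
open Filter Topology

abbrev XX (N : ℕ) := (ℕ → Fin N) × (Fin N → Bool)

noncomputable def de (N : ℕ) (E F : Fin N → Bool) : ℝ :=
  ∑ k : Fin N, if E k = F k then (0:ℝ) else 1

noncomputable def ds (N : ℕ) (S T : ℕ → Fin N) : ℝ :=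
  (9 / (N:ℝ)) * ∑' k : ℕ, |((S k : ℕ) : ℝ) - ((T k : ℕ) : ℝ)| / 10 ^ (k + 1)

noncomputable def dX (N : ℕ) (x y : XX N) : ℝ := de N x.2 y.2 + ds N x.1 y.1

def Ff (N : ℕ) (f : (Fin N → Bool) → Fin N → Bool) (k : Fin N) (E : Fin N → Bool) :
    Fin N → Bool := fun j => if j = k then f E j else E j

def Gf (N : ℕ) (f : (Fin N → Bool) → Fin N → Bool) (x : XX N) : XX N :=
  (fun n => x.1 (n + 1), Ff N f (x.1 0) x.2)

def f0 (N : ℕ) : (Fin N → Bool) → Fin N → Bool := fun E k => !(E k)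

def evolve (N : ℕ) (f : (Fin N → Bool) → Fin N → Bool) :
    ℕ → (ℕ → Fin N) → (Fin N → Bool) → (Fin N → Bool)
  | 0, _, E => E
  | k+1, S, E => evolve N f k (fun n => S (n+1)) (Ff N f (S 0) E)

lemma iterate_Gf (N : ℕ) (f) (k : ℕ) (x : XX N) :
    (Gf N f)^[k] x = (fun n => x.1 (n + k), evolve N f k x.1 x.2) := by
  induction k generalizing x with
  | zero => simp [evolve]
  | succ k ih =>
    rw [Function.iterate_succ_apply, ih]
    refine Prod.ext ?_ ?_
    · funext n; simp [Gf]; ring_nf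
    · rfl

lemma evolve_congr (N : ℕ) (f) (k : ℕ) (S S' : ℕ → Fin N) (E)
    (h : ∀ n < k, S n = S' n) : evolve N f k S E = evolve N f k S' E := by
  induction k generalizing S S' E with
  | zero => rfl
  | succ k ih =>
    show evolve N f k _ _ = evolve N f k _ _
    rw [h 0 (by omega)]
    exact ih _ _ _ fun n hn => h (n+1) (by omega)

lemma evolve_add (N : ℕ) (f) (m j : ℕ) (S : ℕ → Fin N) (E) :
    evolve N f (m + j) S E = evolve N f j (fun n => S (m + n)) (evolve N f m S E) := by
  induction m generalizing S E with
  | zero => simp [evolve]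
  | succ m ih =>
    have e1 : m + 1 + j = (m + j) + 1 := by omega
    rw [e1]
    show evolve N f (m + j) (fun n => S (n+1)) (Ff N f (S 0) E) = _
    rw [ih]
    show evolve N f j (fun n => S (m + n + 1)) (evolve N f (m+1) S E)
      = evolve N f j (fun n => S (m + 1 + n)) (evolve N f (m+1) S E)
    have e2 : (fun n => S (m + n + 1)) = (fun n => S (m + 1 + n)) := by
      funext n; congr 1; omega
    rw [e2]

def runL (N : ℕ) (L : List (Fin N)) (E : Fin N → Bool) : Fin N → Bool :=
  L.foldl (fun E c => Ff N (f0 N) c E) E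

lemma runL_nodup (N : ℕ) (L : List (Fin N)) (hL : L.Nodup) (E : Fin N → Bool) (j : Fin N) :
    runL N L E j = if j ∈ L then !(E j) else E j := by
  induction L generalizing E with
  | nil => simp [runL]
  | cons c L ih =>
    have hc : c ∉ L := (List.nodup_cons.1 hL).1
    have : runL N (c :: L) E = runL N L (Ff N (f0 N) c E) := rfl
    rw [this, ih (List.nodup_cons.1 hL).2]
    by_cases hjc : j = c
    · subst hjc
      simp [hc, Ff, f0]
    · simp [hjc, Ff, f0]

lemma evolve_list (N : ℕ) (L : List (Fin N)) (S : ℕ → Fin N) (E)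
    (h : ∀ i (hi : i < L.length), S i = L.get ⟨i, hi⟩) :
    evolve N (f0 N) L.length S E = runL N L E := by
  induction L generalizing S E with
  | nil => rfl
  | cons c L ih =>
    simp only [List.length_cons, evolve, runL, List.foldl_cons]
    have h0 : S 0 = c := by simpa using h 0 (by simp)
    rw [h0]
    exact ih _ _ fun i hi => h (i+1) (Nat.succ_lt_succ hi)

lemma ds_le (N m : ℕ) (hN : 1 ≤ N) (S T : ℕ → Fin N) (h : ∀ n < m, S n = T n) :
    ds N S T ≤ (1/10 : ℝ)^m := by
  set f : ℕ → ℝ := fun k => |((S k : ℕ) : ℝ) - ((T k : ℕ) : ℝ)| / 10 ^ (k + 1) with hf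
  set g : ℕ → ℝ := fun k => (N : ℝ) * (1/10)^(k+1) with hg
  have hNpos : (0:ℝ) < N := by exact_mod_cast hN
  have hfnn : ∀ k, 0 ≤ f k := fun k => by positivity
  have hfg : ∀ k, f k ≤ g k := by
    intro k
    have h1 : |((S k : ℕ) : ℝ) - ((T k : ℕ) : ℝ)| ≤ N := by
      have hS : ((S k : ℕ) : ℝ) < N := by exact_mod_cast (S k).2
      have hT : ((T k : ℕ) : ℝ) < N := by exact_mod_cast (T k).2
      have hS0 : (0:ℝ) ≤ ((S k : ℕ) : ℝ) := by positivity
      have hT0 : (0:ℝ) ≤ ((T k : ℕ) : ℝ) := by positivity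
      rw [abs_le]
      constructor <;> linarith
    have h2 : (0:ℝ) < 10 ^ (k+1) := by positivity
    rw [hg]
    simp only [div_pow, one_pow, mul_div_assoc, mul_one_div]
    rw [div_le_div_iff₀ h2 h2]
    nlinarith
  have hgsum : Summable g := by
    have : Summable (fun k : ℕ => ((N : ℝ) * (1/10)) * (1/10)^k) :=
      (summable_geometric_of_lt_one (by norm_num) (by norm_num)).mul_left _
    refine this.congr fun k => by rw [hg]; ring
  have hfsum : Summable f := Summable.of_nonneg_of_le hfnn hfg hgsum
  have hzero : ∀ n < m, f n = 0 := by
    intro n hn; simp [hf, h n hn]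
  have key : ∑' k, f k = ∑' k, f (k + m) := by
    rw [← Summable.sum_add_tsum_nat_add m hfsum]
    rw [Finset.sum_eq_zero (fun i hi => hzero i (Finset.mem_range.1 hi)), zero_add]
  have hshift : Summable (fun k => f (k + m)) := (summable_nat_add_iff m).2 hfsum
  have hgshift : Summable (fun k => g (k + m)) := (summable_nat_add_iff m).2 hgsum
  have hle : ∑' k, f (k + m) ≤ ∑' k, g (k + m) :=
    Summable.tsum_le_tsum (fun k => hfg (k+m)) hshift hgshift
  have hgval : ∑' k, g (k + m) = (N:ℝ) * (1/10)^(m+1) * (1 - 1/10)⁻¹ := by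
    have : ∀ k, g (k + m) = ((N:ℝ) * (1/10)^(m+1)) * (1/10)^k := by
      intro k; rw [hg]; ring
    rw [tsum_congr this, tsum_mul_left, tsum_geometric_of_lt_one (by norm_num) (by norm_num)]
  have htot : ∑' k, f k ≤ (N:ℝ) * (1/10)^(m+1) * (1 - 1/10)⁻¹ := by
    rw [key, ← hgval]; exact hle
  have hds : ds N S T = (9 / (N:ℝ)) * ∑' k, f k := rfl
  rw [hds]
  have h9 : (0:ℝ) < 9 / N := by positivity
  calc (9 / (N:ℝ)) * ∑' k, f k ≤ (9 / (N:ℝ)) * ((N:ℝ) * (1/10)^(m+1) * (1 - 1/10)⁻¹) :=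
        mul_le_mul_of_nonneg_left htot h9.le
    _ = (1/10:ℝ)^m := by
        field_simp
        ring

/-- G_{f_0} is topologically transitive on (X, d). -/
theorem stmt9 (N : ℕ) (hN : 1 ≤ N) :
    ∀ A B : Set (XX N),
      (∀ a ∈ A, ∃ ε > (0:ℝ), ∀ y, dX N a y < ε → y ∈ A) →
      (∀ b ∈ B, ∃ ε > (0:ℝ), ∀ y, dX N b y < ε → y ∈ B) →
      A.Nonempty → B.Nonempty →
      ∃ k : ℕ, ∃ a ∈ A, (Gf N (f0 N))^[k] a ∈ B := by
  intro A B hA _hB ⟨a, haA⟩ ⟨b, hbB⟩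
  obtain ⟨ε, hε, hball⟩ := hA a haA
  obtain ⟨m, hm⟩ := exists_pow_lt_of_lt_one hε (show (1/10:ℝ) < 1 by norm_num)
  set Em := evolve N (f0 N) m a.1 a.2 with hEm
  set L := (Finset.univ.filter fun i : Fin N => ¬ (Em i = b.2 i)).toList with hL
  set S : ℕ → Fin N := fun n =>
    if h1 : n < m then a.1 n
    else if h2 : n - m < L.length then L.get ⟨n - m, h2⟩
    else b.1 (n - m - L.length) with hS
  refine ⟨m + L.length, (S, a.2), ?_, ?_⟩
  · apply hball
    have hde : de N a.2 a.2 = 0 := by simp [de]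
    have hds : ds N a.1 S ≤ (1/10:ℝ)^m := by
      refine ds_le N m hN a.1 S fun n hn => ?_
      simp [hS, hn]
    have : dX N a (S, a.2) = de N a.2 a.2 + ds N a.1 S := rfl
    rw [this, hde, zero_add]
    exact lt_of_le_of_lt hds hm
  · rw [iterate_Gf]
    have hb : (fun n => (S, a.2).1 (n + (m + L.length)),
        evolve N (f0 N) (m + L.length) (S, a.2).1 (S, a.2).2) = b := by
      refine Prod.ext ?_ ?_
      · funext n
        show S (n + (m + L.length)) = b.1 n
        rw [hS]
        simp only
        rw [dif_neg (by omega), dif_neg (by omega)]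
        have e : n + (m + L.length) - m - L.length = n := by omega
        rw [e]
      · show evolve N (f0 N) (m + L.length) S a.2 = b.2
        rw [evolve_add]
        have h1 : evolve N (f0 N) m S a.2 = Em := by
          rw [hEm]
          refine evolve_congr N (f0 N) m S a.1 a.2 fun n hn => ?_
          simp [hS, hn]
        rw [h1]
        have h2 : evolve N (f0 N) L.length (fun n => S (m + n)) Em = runL N L Em := by
          refine evolve_list N L _ Em fun i hi => ?_
          rw [hS]
          simp only
          rw [dif_neg (by omega), dif_pos (by omega)]
          simp [Nat.add_sub_cancel_left]
        rw [h2]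
        funext j
        rw [runL_nodup N L (Finset.nodup_toList _) Em j]
        by_cases hj : Em j = b.2 j
        · simp [hL, Finset.mem_toList, hj]
        · simp only [hL, Finset.mem_toList, Finset.mem_filter, Finset.mem_univ, true_and,
            hj, not_false_iff, if_true]
          cases hE : Em j <;> cases hB : b.2 j <;> simp_all
    rw [hb]
    exact hbB
end

section
/- The periodic points of G_{f_0} are dense in (X,d). -/
open scoped BigOperators
open Filter Topology

def flips (N : ℕ) (T : ℕ → Fin N) : ℕ → Fin N → Bool
  | 0 => fun _ => false
  | p+1 => fun j => xor (flips N T p j) (decide (j = T p))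

lemma gf_iter (N : ℕ) (T : ℕ → Fin N) (F : Fin N → Bool) :
    ∀ p, (Gf N (f0 N))^[p] (T, F) =
      (fun m => T (m + p), fun j => xor (flips N T p j) (F j)) := by
  intro p
  induction p with
  | zero => simp [flips]
  | succ p ih =>
      rw [Function.iterate_succ_apply', ih]
      unfold Gf Ff f0
      refine Prod.ext ?_ ?_
      · funext m; simp only []; congr 1; omega
      · funext j
        simp only [flips, zero_add]
        by_cases h : j = T p <;> simp [h]

lemma gf_periodic (N n : ℕ) (T : ℕ → Fin N) (hT : ∀ m, T (m + n) = T m)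
    (E : Fin N → Bool) : (Gf N (f0 N))^[2 * n] (T, E) = (T, E) := by
  have hshift : (fun m => T (m + n)) = T := funext hT
  have h1 : ∀ F : Fin N → Bool, (Gf N (f0 N))^[n] (T, F) =
      (T, fun j => xor (flips N T n j) (F j)) := by
    intro F; rw [gf_iter, hshift]
  have h2 : 2 * n = n + n := by ring
  rw [h2, Function.iterate_add_apply, h1, h1]
  refine Prod.ext rfl ?_
  funext j
  show (flips N T n j ^^ (flips N T n j ^^ E j)) = E j
  cases flips N T n j <;> cases E j <;> rfl

/-- The periodic points of G_{f_0} are dense in (X, d). -/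
theorem stmt10 (N : ℕ) (hN : 1 ≤ N) :
    ∀ x : XX N, ∀ ε > (0:ℝ), ∃ y : XX N,
      dX N x y < ε ∧ ∃ p : ℕ, 1 ≤ p ∧ (Gf N (f0 N))^[p] y = y := by
  rintro ⟨S, E⟩ ε hε
  obtain ⟨m, hm⟩ : ∃ m : ℕ, (1/10:ℝ)^m < ε := by
    obtain ⟨m, hm⟩ := exists_pow_lt_of_lt_one hε (by norm_num : (1/10:ℝ) < 1)
    exact ⟨m, hm⟩
  set n := m + 1 with hn
  set T : ℕ → Fin N := fun k => S (k % n) with hTdef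
  refine ⟨(T, E), ?_, 2 * n, by omega, ?_⟩
  · -- distance bound
    have hde : de N E E = 0 := by simp [de]
    have hN0 : (0:ℝ) < N := by exact_mod_cast hN
    -- term bound
    set f : ℕ → ℝ := fun k => |((S k : ℕ) : ℝ) - ((T k : ℕ) : ℝ)| / 10 ^ (k + 1) with hf
    set g : ℕ → ℝ := fun k => (N:ℝ) * (1/10)^(k+1) with hg
    have hfg : ∀ k, f k ≤ g k := by
      intro k
      have h1 : ((S k : ℕ) : ℝ) < N := by exact_mod_cast (S k).2
      have h2 : ((T k : ℕ) : ℝ) < N := by exact_mod_cast (T k).2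
      have h3 : (0:ℝ) ≤ ((S k : ℕ) : ℝ) := by positivity
      have h4 : (0:ℝ) ≤ ((T k : ℕ) : ℝ) := by positivity
      have habs : |((S k : ℕ) : ℝ) - ((T k : ℕ) : ℝ)| ≤ N := by
        rw [abs_le]; constructor <;> nlinarith
      have : f k = |((S k : ℕ) : ℝ) - ((T k : ℕ) : ℝ)| * (1/10)^(k+1) := by
        simp [hf, div_eq_mul_inv, one_div, inv_pow]
      rw [this, hg]
      have : (0:ℝ) ≤ (1/10:ℝ)^(k+1) := by positivity
      exact mul_le_mul_of_nonneg_right habs this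
    have hfnn : ∀ k, 0 ≤ f k := by intro k; positivity
    have hgsum : Summable g := by
      apply Summable.mul_left
      exact (summable_geometric_of_lt_one (by norm_num) (by norm_num)).comp_injective
        (add_left_injective 1)
    have hfsum : Summable f := Summable.of_nonneg_of_le hfnn hfg hgsum
    have hzero : ∀ k < n, f k = 0 := by
      intro k hk
      have : T k = S k := by simp [hTdef, Nat.mod_eq_of_lt hk]
      simp [hf, this]
    -- split the tsum
    have hsplit := Summable.sum_add_tsum_nat_add n hfsum
    have hsum0 : ∑ i ∈ Finset.range n, f i = 0 :=
      Finset.sum_eq_zero fun i hi => hzero i (Finset.mem_range.mp hi)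
    have htail : ∑' k, f (k + n) ≤ (N:ℝ) * (1/10)^n / 9 := by
      have h1 : ∑' k, f (k + n) ≤ ∑' k, g (k + n) := by
        apply Summable.tsum_le_tsum (fun k => hfg (k + n)) (hfsum.comp_injective (add_left_injective n))
          (hgsum.comp_injective (add_left_injective n))
      refine h1.trans ?_
      have : ∀ k, g (k + n) = ((N:ℝ) * (1/10)^(n+1)) * (1/10)^k := by
        intro k; rw [hg]; ring
      rw [tsum_congr this, tsum_mul_left, tsum_geometric_of_lt_one (by norm_num) (by norm_num)]
      rw [show ((1:ℝ) - 1/10)⁻¹ = 10/9 by norm_num]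
      ring_nf
      nlinarith [pow_nonneg (by norm_num : (0:ℝ) ≤ 1/10) n, hN0]
    have hds : ds N S T ≤ (1/10)^n := by
      have htsum : ∑' k, f k ≤ (N:ℝ) * (1/10)^n / 9 := by
        rw [← hsplit, hsum0, zero_add]; exact htail
      have : ds N S T = (9 / (N:ℝ)) * ∑' k, f k := rfl
      rw [this]
      have h9 : (0:ℝ) < 9 / N := by positivity
      calc (9 / (N:ℝ)) * ∑' k, f k ≤ (9 / (N:ℝ)) * ((N:ℝ) * (1/10)^n / 9) :=
            mul_le_mul_of_nonneg_left htsum h9.le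
        _ = (1/10)^n := by field_simp
    have hlt : (1/10:ℝ)^n ≤ (1/10)^m := by
      apply pow_le_pow_of_le_one (by norm_num) (by norm_num); omega
    have : dX N (S, E) (T, E) = ds N S T := by simp [dX, hde]
    rw [this]
    exact lt_of_le_of_lt (hds.trans hlt) hm
  · apply gf_periodic
    intro k
    simp [hTdef, Nat.add_mod_right]
end

section
/- G_f is topologically transitive on (X,d) if and only if the asynchronous iteration graph Γ(f) is strongly connected. -/
open scoped BigOperators
open Filter Topology

def iterE (N : ℕ) (f : (Fin N → Bool) → Fin N → Bool) :
    ℕ → (ℕ → Fin N) → (Fin N → Bool) → (Fin N → Bool)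
  | 0, _, E => E
  | k+1, S, E => iterE N f k (fun n => S (n+1)) (Ff N f (S 0) E)

lemma iterE_succ (N : ℕ) (f : (Fin N → Bool) → Fin N → Bool) (k : ℕ)
    (S : ℕ → Fin N) (E : Fin N → Bool) :
    iterE N f (k+1) S E = iterE N f k (fun n => S (n+1)) (Ff N f (S 0) E) := rfl

lemma Gf_iterate (N : ℕ) (f : (Fin N → Bool) → Fin N → Bool) (k : ℕ)
    (S : ℕ → Fin N) (E : Fin N → Bool) :
    (Gf N f)^[k] (S, E) = (fun n => S (n+k), iterE N f k S E) := by
  induction k generalizing S E with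
  | zero => simp [iterE]
  | succ k ih =>
      rw [Function.iterate_succ_apply]
      show (Gf N f)^[k] (fun n => S (n+1), Ff N f (S 0) E) = _
      rw [ih]
      refine Prod.ext ?_ rfl
      funext n
      simp only
      ring_nf

lemma iterE_reflTransGen (N : ℕ) (f : (Fin N → Bool) → Fin N → Bool) (k : ℕ)
    (S : ℕ → Fin N) (E : Fin N → Bool) :
    Relation.ReflTransGen (fun u v => ∃ i : Fin N, v = Ff N f i u) E (iterE N f k S E) := by
  induction k generalizing S E with
  | zero => exact Relation.ReflTransGen.refl
  | succ k ih => exact Relation.ReflTransGen.head ⟨S 0, rfl⟩ (ih _ _)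

lemma reflTransGen_iterE (N : ℕ) (hN : 1 ≤ N) (f : (Fin N → Bool) → Fin N → Bool)
    {x y : Fin N → Bool}
    (h : Relation.ReflTransGen (fun u v => ∃ i : Fin N, v = Ff N f i u) x y) :
    ∃ (m : ℕ) (S : ℕ → Fin N), iterE N f m S x = y := by
  induction h using Relation.ReflTransGen.head_induction_on with
  | refl => exact ⟨0, fun _ => ⟨0, hN⟩, rfl⟩
  | head hstep _ ih =>
      obtain ⟨i, hi⟩ := hstep
      obtain ⟨m, S, hS⟩ := ih
      refine ⟨m + 1, fun n => if n = 0 then i else S (n - 1), ?_⟩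
      show iterE N f m (fun n => if n + 1 = 0 then i else S (n + 1 - 1))
        (Ff N f (if (0:ℕ) = 0 then i else S (0 - 1)) _) = y
      simp only [Nat.succ_ne_zero, if_false, Nat.add_sub_cancel, if_pos rfl, if_true]
      rw [← hi]
      exact hS

lemma iterE_congr (N : ℕ) (f : (Fin N → Bool) → Fin N → Bool) (k : ℕ)
    (S T : ℕ → Fin N) (E : Fin N → Bool) (h : ∀ i < k, S i = T i) :
    iterE N f k S E = iterE N f k T E := by
  induction k generalizing S T E with
  | zero => rfl
  | succ k ih =>
      show iterE N f k (fun n => S (n+1)) (Ff N f (S 0) E)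
        = iterE N f k (fun n => T (n+1)) (Ff N f (T 0) E)
      rw [h 0 (Nat.succ_pos k)]
      exact ih _ _ _ (fun i hi => h (i+1) (by omega))

lemma iterE_add (N : ℕ) (f : (Fin N → Bool) → Fin N → Bool) (a b : ℕ)
    (S : ℕ → Fin N) (E : Fin N → Bool) :
    iterE N f (a + b) S E = iterE N f b (fun n => S (n + a)) (iterE N f a S E) := by
  induction a generalizing S E with
  | zero => simp [iterE]
  | succ a ih =>
      have h1 : a + 1 + b = (a + b) + 1 := by omega
      rw [h1]
      show iterE N f (a + b) (fun n => S (n+1)) (Ff N f (S 0) E) = _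
      rw [ih]
      have h2 : (fun n => S (n + a + 1)) = (fun n => S (n + (a + 1))) := by
        funext n; congr 1
      rw [h2, iterE_succ]

set_option maxHeartbeats 800000 in
lemma summable_aux (N : ℕ) (S T : ℕ → Fin N) :
    Summable (fun k : ℕ => |((S k : ℕ) : ℝ) - ((T k : ℕ) : ℝ)| / 10 ^ (k + 1)) := by
  apply Summable.of_nonneg_of_le (fun k => by positivity)
    (f := fun k => (N:ℝ) * (1/10)^(k+1))
  · intro k
    rw [div_le_iff₀ (by positivity)]
    have h1 : ((S k : ℕ) : ℝ) ≤ N := by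
      exact_mod_cast le_of_lt (S k).isLt
    have h2 : ((T k : ℕ) : ℝ) ≤ N := by
      exact_mod_cast le_of_lt (T k).isLt
    have h3 : (0:ℝ) ≤ ((S k : ℕ) : ℝ) := by positivity
    have h4 : (0:ℝ) ≤ ((T k : ℕ) : ℝ) := by positivity
    have habs : |((S k : ℕ) : ℝ) - ((T k : ℕ) : ℝ)| ≤ N := by
      rw [abs_le]; constructor <;> nlinarith
    calc |((S k : ℕ) : ℝ) - ((T k : ℕ) : ℝ)| ≤ N := habs
      _ = (N:ℝ) * (1/10)^(k+1) * 10^(k+1) := by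
          rw [mul_assoc]
          simp [div_pow, one_div, inv_mul_cancel₀ (by positivity : (10:ℝ)^(k+1) ≠ 0)]
  · exact (((summable_geometric_of_lt_one (by norm_num) (by norm_num : (1/10:ℝ) < 1)).mul_left
      ((N:ℝ) * (1/10))).congr (fun k => by ring))

lemma ds_nonneg (N : ℕ) (S T : ℕ → Fin N) : 0 ≤ ds N S T := by
  unfold ds
  apply mul_nonneg (by positivity)
  exact tsum_nonneg (fun k => by positivity)

lemma de_nonneg (N : ℕ) (E F : Fin N → Bool) : 0 ≤ de N E F := by
  unfold de
  apply Finset.sum_nonneg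
  intro k _
  split <;> norm_num

lemma de_self (N : ℕ) (E : Fin N → Bool) : de N E E = 0 := by
  unfold de; simp

lemma eq_of_de_lt_one (N : ℕ) (E F : Fin N → Bool) (h : de N E F < 1) : E = F := by
  by_contra hne
  have : ∃ j, E j ≠ F j := by
    by_contra hc
    push_neg at hc
    exact hne (funext hc)
  obtain ⟨j, hj⟩ := this
  have : (1:ℝ) ≤ de N E F := by
    unfold de
    have := Finset.single_le_sum (f := fun k : Fin N => if E k = F k then (0:ℝ) else 1)
      (fun k _ => by by_cases hk : E k = F k <;> simp [hk]) (Finset.mem_univ j)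
    simpa [if_neg hj] using this
  linarith

lemma ds_le_of_agree (N : ℕ) (hN : 1 ≤ N) (S T : ℕ → Fin N) (n₀ : ℕ)
    (h : ∀ k < n₀, S k = T k) : ds N S T ≤ (1/10)^n₀ := by
  unfold ds
  set g : ℕ → ℝ := fun k => |((S k : ℕ) : ℝ) - ((T k : ℕ) : ℝ)| / 10 ^ (k + 1) with hg
  have hsum : Summable g := summable_aux N S T
  have hsplit := Summable.sum_add_tsum_nat_add n₀ hsum
  have hzero : ∑ i ∈ Finset.range n₀, g i = 0 := by
    apply Finset.sum_eq_zero
    intro i hi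
    have := h i (Finset.mem_range.mp hi)
    simp [hg, this]
  have htail : ∑' i, g (i + n₀) ≤ (N:ℝ) * (1/10)^(n₀+1) * (10/9) := by
    have hb : Summable (fun i : ℕ => (N:ℝ) * (1/10)^(i + n₀ + 1)) := by
      apply ((summable_geometric_of_lt_one (by norm_num) (by norm_num : (1/10:ℝ) < 1)).mul_left
        ((N:ℝ) * (1/10)^(n₀+1))).congr
      intro k; ring
    have hle : ∀ i : ℕ, g (i + n₀) ≤ (N:ℝ) * (1/10)^(i + n₀ + 1) := by
      intro i
      simp only [hg]
      rw [div_le_iff₀ (by positivity)]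
      have h1 : ((S (i+n₀) : ℕ) : ℝ) ≤ N := by exact_mod_cast le_of_lt (S (i+n₀)).isLt
      have h2 : ((T (i+n₀) : ℕ) : ℝ) ≤ N := by exact_mod_cast le_of_lt (T (i+n₀)).isLt
      have h3 : (0:ℝ) ≤ ((S (i+n₀) : ℕ) : ℝ) := by positivity
      have h4 : (0:ℝ) ≤ ((T (i+n₀) : ℕ) : ℝ) := by positivity
      have habs : |((S (i+n₀) : ℕ) : ℝ) - ((T (i+n₀) : ℕ) : ℝ)| ≤ N := by
        rw [abs_le]; constructor <;> nlinarith
      calc |((S (i+n₀) : ℕ) : ℝ) - ((T (i+n₀) : ℕ) : ℝ)| ≤ N := habs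
        _ = (N:ℝ) * (1/10)^(i+n₀+1) * 10^(i+n₀+1) := by
            rw [mul_assoc]
            simp [div_pow, one_div, inv_mul_cancel₀ (by positivity : (10:ℝ)^(i+n₀+1) ≠ 0)]
    calc ∑' i, g (i + n₀) ≤ ∑' i, (N:ℝ) * (1/10)^(i + n₀ + 1) :=
          Summable.tsum_le_tsum hle ((summable_nat_add_iff n₀).mpr hsum) hb
      _ = (N:ℝ) * (1/10)^(n₀+1) * ∑' i : ℕ, (1/10:ℝ)^i := by
          rw [← tsum_mul_left]
          congr 1; funext i; ring
      _ = (N:ℝ) * (1/10)^(n₀+1) * (10/9) := by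
          rw [tsum_geometric_of_lt_one (by norm_num) (by norm_num)]
          norm_num
  have htsum : ∑' k, g k ≤ (N:ℝ) * (1/10)^(n₀+1) * (10/9) := by
    rw [← hsplit, hzero, zero_add]; exact htail
  have hNpos : (0:ℝ) < N := by exact_mod_cast hN
  calc (9 / (N:ℝ)) * ∑' k, g k ≤ (9 / (N:ℝ)) * ((N:ℝ) * (1/10)^(n₀+1) * (10/9)) := by
        apply mul_le_mul_of_nonneg_left htsum (by positivity)
    _ = (1/10)^n₀ := by field_simp; ring

/-- G_f is topologically transitive iff the asynchronous iteration graph Γ(f) is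
strongly connected. -/
theorem stmt12 (N : ℕ) (hN : 1 ≤ N) (f : (Fin N → Bool) → Fin N → Bool) :
    (∀ A B : Set (XX N),
      (∀ a ∈ A, ∃ ε > (0:ℝ), ∀ y, dX N a y < ε → y ∈ A) →
      (∀ b ∈ B, ∃ ε > (0:ℝ), ∀ y, dX N b y < ε → y ∈ B) →
      A.Nonempty → B.Nonempty →
      ∃ k : ℕ, ∃ a ∈ A, (Gf N f)^[k] a ∈ B) ↔
    (∀ x y : Fin N → Bool,
      Relation.ReflTransGen (fun u v => ∃ i : Fin N, v = Ff N f i u) x y) := by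
  constructor
  · intro htr x y
    have hopen : ∀ z : Fin N → Bool, ∀ a ∈ {p : XX N | p.2 = z},
        ∃ ε > (0:ℝ), ∀ y', dX N a y' < ε → y' ∈ {p : XX N | p.2 = z} := by
      intro z a ha
      refine ⟨1, one_pos, fun y' hy' => ?_⟩
      have hde : de N a.2 y'.2 < 1 := by
        have := ds_nonneg N a.1 y'.1
        unfold dX at hy'
        linarith
      have := eq_of_de_lt_one N a.2 y'.2 hde
      simp only [Set.mem_setOf_eq] at ha ⊢
      rw [← this, ha]
    obtain ⟨k, a, ha, hb⟩ := htr {p : XX N | p.2 = x} {p : XX N | p.2 = y}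
      (hopen x) (hopen y) ⟨(fun _ => ⟨0, hN⟩, x), rfl⟩ ⟨(fun _ => ⟨0, hN⟩, y), rfl⟩
    simp only [Set.mem_setOf_eq] at ha hb
    rw [show a = (a.1, a.2) from rfl, Gf_iterate] at hb
    simp only at hb
    rw [← hb, ha]
    exact iterE_reflTransGen N f k a.1 x
  · intro hsc A B hA hB ⟨a, haA⟩ ⟨b, hbB⟩
    obtain ⟨ε, hε, hball⟩ := hA a haA
    obtain ⟨n₀, hn₀⟩ := exists_pow_lt_of_lt_one hε (by norm_num : (1/10:ℝ) < 1)
    set E₀ := iterE N f n₀ a.1 a.2 with hE₀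
    obtain ⟨m, L, hL⟩ := reflTransGen_iterE N hN f (hsc E₀ b.2)
    set S' : ℕ → Fin N := fun k =>
      if k < n₀ then a.1 k else if k < n₀ + m then L (k - n₀) else b.1 (k - (n₀ + m)) with hS'
    refine ⟨n₀ + m, (S', a.2), ?_, ?_⟩
    · apply hball
      have hagree : ∀ k < n₀, a.1 k = S' k := by
        intro k hk
        simp [hS', hk]
      have hds : ds N a.1 S' ≤ (1/10)^n₀ := ds_le_of_agree N hN a.1 S' n₀ hagree
      unfold dX
      simp only
      rw [de_self]
      linarith
    · rw [Gf_iterate]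
      have hstrat : (fun n => S' (n + (n₀ + m))) = b.1 := by
        funext n
        simp only [hS']
        rw [if_neg (by omega), if_neg (by omega), Nat.add_sub_cancel]
      have hstate : iterE N f (n₀ + m) S' a.2 = b.2 := by
        rw [iterE_add]
        have h1 : iterE N f n₀ S' a.2 = E₀ := by
          rw [hE₀]
          exact iterE_congr N f n₀ S' a.1 a.2 (fun i hi => by simp [hS', hi])
        rw [h1]
        rw [iterE_congr N f m (fun n => S' (n + n₀)) L E₀ ?_]
        · exact hL
        · intro i hi
          simp only [hS']
          rw [if_neg (by omega), if_pos (by omega), Nat.add_sub_cancel]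
      rw [hstrat, hstate]
      exact hbB
end
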